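/- arXiv:1103.2822 — 2 statements merged into one kernel-verified Lean document; each statement's English description precedes it below -/
import Mathlib

section
/- Along solutions of the closed-loop 3D pendulum dynamics J Ω̇ = -Ω × JΩ - k_R e_R - k_Ω Ω, Ṙ = R Ω̂, the Lyapunov function V = ½ Ω·JΩ + k_R Ψ(R, R_d) satisfies dV/dt = -k_Ω ‖Ω‖². -/
open Matrix

/-- `R ∈ SO(3)`: rotation matrices. -/
def SO3 (R : Matrix (Fin 3) (Fin 3) ℝ) : Prop := Rᵀ * R = 1 ∧ R.det = 1

/-- The hat map: `hat x` is the skew-symmetric matrix with `(hat x).mulVec y = x × y`. -/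
def hat (x : Fin 3 → ℝ) : Matrix (Fin 3) (Fin 3) ℝ :=
  !![0, -x 2, x 1; x 2, 0, -x 0; -x 1, x 0, 0]

/-- The vee map, inverse of the hat map on skew-symmetric matrices. -/
def vee (S : Matrix (Fin 3) (Fin 3) ℝ) : Fin 3 → ℝ := ![S 2 1, S 0 2, S 1 0]

/-! Since `J` is symmetric, the kinetic energy has derivative `Ω ⬝ JΩ̇`; along the dynamics the
gyroscopic term `Ω ⬝ (Ω × JΩ)` vanishes, leaving `-k_R Ω ⬝ e_R - k_Ω ‖Ω‖²`. Since `Ṙ = RΩ̂`, the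
potential `Ψ` has derivative `-½ tr(R_dᵀ R Ω̂ G)`, and the identity `tr(A Ω̂) = -Ω ⬝ (A - Aᵀ)∨`
applied to `A = G R_dᵀ R` rewrites it as `Ω ⬝ e_R`, which cancels the control term. -/

section Derivatives

variable {m n o : Type*} [Fintype n] {t : ℝ}

theorem HasDerivAt.dotProduct {u v : ℝ → n → ℝ} {u' v' : n → ℝ}
    (hu : HasDerivAt u u' t) (hv : HasDerivAt v v' t) :
    HasDerivAt (fun s => u s ⬝ᵥ v s) (u' ⬝ᵥ v t + u t ⬝ᵥ v') t := by
  have h := HasDerivAt.fun_sum fun i (_ : i ∈ Finset.univ) =>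
    (hasDerivAt_pi.mp hu i).fun_mul (hasDerivAt_pi.mp hv i)
  rwa [Finset.sum_add_distrib] at h

theorem HasDerivAt.mulVec (A : Matrix m n ℝ) {v : ℝ → n → ℝ} {v' : n → ℝ}
    (hv : HasDerivAt v v' t) : HasDerivAt (fun s => A *ᵥ v s) (A *ᵥ v') t :=
  hasDerivAt_pi.mpr fun i =>
    HasDerivAt.fun_sum fun j _ => (hasDerivAt_pi.mp hv j).const_mul (A i j)

theorem HasDerivAt.dotProduct_mulVec_self {J : Matrix n n ℝ} (hJ : J.IsSymm)
    {v : ℝ → n → ℝ} {v' : n → ℝ} (hv : HasDerivAt v v' t) :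
    HasDerivAt (fun s => v s ⬝ᵥ J *ᵥ v s) (2 * (v t ⬝ᵥ J *ᵥ v')) t := by
  convert hv.dotProduct (hv.mulVec J) using 1
  rw [dotProduct_comm, dotProduct_mulVec, ← mulVec_transpose, hJ.eq]
  ring

theorem hasDerivAt_trace_mul_mul [Fintype m] [Fintype o] (A : Matrix m n ℝ) (B : Matrix o m ℝ)
    {M : ℝ → Matrix n o ℝ} {M' : Matrix n o ℝ}
    (hM : ∀ i j, HasDerivAt (fun s => M s i j) (M' i j) t) :
    HasDerivAt (fun s => (A * M s * B).trace) (A * M' * B).trace t := by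
  simp only [trace, diag, mul_apply, Finset.sum_mul]
  exact HasDerivAt.fun_sum fun i _ => HasDerivAt.fun_sum fun k _ => HasDerivAt.fun_sum fun j _ =>
    ((hM j k).const_mul (A i j)).mul_const (B k i)

end Derivatives

theorem trace_mul_hat (A : Matrix (Fin 3) (Fin 3) ℝ) (ω : Fin 3 → ℝ) :
    (A * hat ω).trace = -(ω ⬝ᵥ vee (A - Aᵀ)) := by
  simp [trace, mul_apply, hat, vee, dotProduct, Fin.sum_univ_three]
  ring

theorem hasDerivAt_half_trace_one_sub_mul_diagonal (Rd : Matrix (Fin 3) (Fin 3) ℝ) (g : Fin 3 → ℝ)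
    {R : ℝ → Matrix (Fin 3) (Fin 3) ℝ} {ω : Fin 3 → ℝ} {t : ℝ}
    (hR : ∀ i j, HasDerivAt (fun s => R s i j) ((R t * hat ω) i j) t) :
    HasDerivAt (fun s => (1 / 2 : ℝ) * ((1 - Rdᵀ * R s) * diagonal g).trace)
      (ω ⬝ᵥ fun k => (1 / 2 : ℝ) * vee (diagonal g * Rdᵀ * R t - (R t)ᵀ * Rd * diagonal g) k) t := by
  have hsplit : ∀ s, ((1 - Rdᵀ * R s) * diagonal g).trace
      = (diagonal g).trace - (Rdᵀ * R s * diagonal g).trace := fun s => by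
    rw [Matrix.sub_mul, Matrix.one_mul, trace_sub]
  have hrot : (Rdᵀ * (R t * hat ω) * diagonal g).trace
      = -(ω ⬝ᵥ vee (diagonal g * Rdᵀ * R t - (R t)ᵀ * Rd * diagonal g)) := by
    rw [trace_mul_comm, ← Matrix.mul_assoc, ← Matrix.mul_assoc, trace_mul_hat]
    simp only [transpose_mul, transpose_transpose, diagonal_transpose, Matrix.mul_assoc]
  simp only [hsplit]
  refine (((hasDerivAt_trace_mul_mul Rdᵀ (diagonal g) hR).const_sub _).const_mul
    (1 / 2 : ℝ)).congr_deriv ?_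
  rw [hrot]
  change _ = ω ⬝ᵥ ((1 / 2 : ℝ) • vee _)
  rw [dotProduct_smul, smul_eq_mul, neg_neg]

theorem attitude_lyapunov_decay_general
    (J : Matrix (Fin 3) (Fin 3) ℝ) (hJ : J.PosDef)
    (Rd : Matrix (Fin 3) (Fin 3) ℝ)
    (g : Fin 3 → ℝ)
    (kR kΩ : ℝ)
    (R : ℝ → Matrix (Fin 3) (Fin 3) ℝ) (Ω Ω' : ℝ → Fin 3 → ℝ)
    (hR : ∀ t : ℝ, ∀ i j : Fin 3, HasDerivAt (fun s => R s i j) ((R t * hat (Ω t)) i j) t)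
    (hΩ : ∀ t : ℝ, HasDerivAt Ω (Ω' t) t)
    (hdyn : ∀ t : ℝ, J.mulVec (Ω' t)
      = -(crossProduct (Ω t) (J.mulVec (Ω t)))
        - kR • (fun k => (1 / 2 : ℝ) *
            vee (diagonal g * Rdᵀ * R t - (R t)ᵀ * Rd * diagonal g) k)
        - kΩ • Ω t) :
    ∀ t : ℝ,
      HasDerivAt
        (fun s => (1 / 2 : ℝ) * (Ω s ⬝ᵥ J.mulVec (Ω s))
          + kR * ((1 / 2 : ℝ) *
              (((1 : Matrix (Fin 3) (Fin 3) ℝ) - Rdᵀ * R s) * diagonal g).trace))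
        (-(kΩ * (Ω t ⬝ᵥ Ω t))) t := by
  intro t
  have hkinetic := (hΩ t).dotProduct_mulVec_self (isHermitian_iff_isSymm.mp hJ.isHermitian)
  have hpotential := hasDerivAt_half_trace_one_sub_mul_diagonal Rd g (hR t)
  refine ((hkinetic.const_mul (1 / 2 : ℝ)).add (hpotential.const_mul kR)).congr_deriv ?_
  rw [hdyn t, dotProduct_sub, dotProduct_sub, dotProduct_neg, dot_self_cross, dotProduct_smul,
    dotProduct_smul, smul_eq_mul, smul_eq_mul]
  ring

/-- Along solutions of the closed-loop 3D pendulum dynamics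
`J Ω̇ = -Ω × JΩ - k_R e_R - k_Ω Ω`, `Ṙ = R Ω̂`, the Lyapunov function
`V = ½ Ω⬝JΩ + k_R Ψ(R, R_d)` satisfies `dV/dt = -k_Ω ‖Ω‖²`. -/
theorem attitude_lyapunov_decay
    (J : Matrix (Fin 3) (Fin 3) ℝ) (hJ : J.PosDef)
    (Rd : Matrix (Fin 3) (Fin 3) ℝ) (hRd : SO3 Rd)
    (g : Fin 3 → ℝ) (hg : ∀ i, 0 < g i)
    (kR kΩ : ℝ) (hkR : 0 < kR) (hkΩ : 0 < kΩ)
    (R : ℝ → Matrix (Fin 3) (Fin 3) ℝ) (Ω Ω' : ℝ → Fin 3 → ℝ)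
    (hSO3 : ∀ t : ℝ, SO3 (R t))
    (hR : ∀ t : ℝ, ∀ i j : Fin 3, HasDerivAt (fun s => R s i j) ((R t * hat (Ω t)) i j) t)
    (hΩ : ∀ t : ℝ, HasDerivAt Ω (Ω' t) t)
    (hdyn : ∀ t : ℝ, J.mulVec (Ω' t)
      = -(crossProduct (Ω t) (J.mulVec (Ω t)))
        - kR • (fun k => (1 / 2 : ℝ) *
            vee (diagonal g * Rdᵀ * R t - (R t)ᵀ * Rd * diagonal g) k)
        - kΩ • Ω t) :
    ∀ t : ℝ,
      HasDerivAt
        (fun s => (1 / 2 : ℝ) * (Ω s ⬝ᵥ J.mulVec (Ω s))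
          + kR * ((1 / 2 : ℝ) *
              (((1 : Matrix (Fin 3) (Fin 3) ℝ) - Rdᵀ * R s) * diagonal g).trace))
        (-(kΩ * (Ω t ⬝ᵥ Ω t))) t :=
  attitude_lyapunov_decay_general J hJ Rd g kR kΩ R Ω Ω' hR hΩ hdyn
end

section
/- At the inverted equilibrium (q,ω) = (-e₃, 0) with q_d = e₃ and k_q = k_ω = 1, the linearized spherical pendulum dynamics restricted to the invariant subspace span{e₁,e₂,e₄,e₅} ⊂ ℝ⁶ (with matrix A = [[q qᵀ ω̂, I - q qᵀ],[k_q q̂_d q̂, -k_ω I]]) has eigenvalues -(√5+1)/2 (multiplicity 2) and (√5-1)/2 (multiplicity 2); hence the inverted equilibrium is hyperbolic (a saddle). -/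
open Matrix

/-- The linearization matrix `A = [[q qᵀ ω̂, I - q qᵀ], [k_q q̂_d q̂, -k_ω I]]` of the
closed-loop spherical pendulum at the inverted equilibrium `q = -e₃`, `ω = 0`, with
`q_d = e₃`, `k_q = k_ω = 1`, complexified. -/
noncomputable def Ainv : Matrix (Fin 3 ⊕ Fin 3) (Fin 3 ⊕ Fin 3) ℂ :=
  (fromBlocks
    (vecMulVec (-(Pi.single 2 1)) (-(Pi.single 2 1)) * hat 0)
    ((1 : Matrix (Fin 3) (Fin 3) ℝ) - vecMulVec (-(Pi.single 2 1)) (-(Pi.single 2 1)))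
    ((1 : ℝ) • (hat (Pi.single 2 1) * hat (-(Pi.single 2 1))))
    (-((1 : ℝ) • (1 : Matrix (Fin 3) (Fin 3) ℝ)))).map (Complex.ofReal)

/-- The invariant subspace `span{e₁, e₂, e₄, e₅} ⊂ ℂ⁶` (indices `inl 0, inl 1, inr 0, inr 1`). -/
noncomputable def invSubspace : Submodule ℂ (Fin 3 ⊕ Fin 3 → ℂ) :=
  Submodule.span ℂ
    {Pi.single (Sum.inl 0) 1, Pi.single (Sum.inl 1) 1,
     Pi.single (Sum.inr 0) 1, Pi.single (Sum.inr 1) 1}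

lemma Ainv_mulVec (v : Fin 3 ⊕ Fin 3 → ℂ) :
    Ainv.mulVec v = Sum.elim
      ![v (Sum.inr 0), v (Sum.inr 1), 0]
      ![v (Sum.inl 0) - v (Sum.inr 0), v (Sum.inl 1) - v (Sum.inr 1), -(v (Sum.inr 2))] := by
  funext j
  cases j with
  | inl i =>
    fin_cases i <;>
      simp [Ainv, mulVec, Matrix.mul_apply, dotProduct, Fintype.sum_sum_type, Fin.sum_univ_three,
        fromBlocks, hat, vecMulVec, Pi.single, Function.update, Matrix.one_apply]
  | inr i =>
    fin_cases i <;>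
      simp [Ainv, mulVec, Matrix.mul_apply, dotProduct, Fintype.sum_sum_type, Fin.sum_univ_three,
        fromBlocks, hat, vecMulVec, Pi.single, Function.update, Matrix.one_apply] <;> ring

lemma mem_invSubspace (v : Fin 3 ⊕ Fin 3 → ℂ) :
    v ∈ invSubspace ↔ v (Sum.inl 2) = 0 ∧ v (Sum.inr 2) = 0 := by
  constructor
  · intro hv
    have : invSubspace ≤ (LinearMap.ker (LinearMap.proj (Sum.inl 2) :
        (Fin 3 ⊕ Fin 3 → ℂ) →ₗ[ℂ] ℂ)) ⊓ (LinearMap.ker (LinearMap.proj (Sum.inr 2) :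
        (Fin 3 ⊕ Fin 3 → ℂ) →ₗ[ℂ] ℂ)) := by
      rw [invSubspace, Submodule.span_le]
      intro w hw
      simp only [Set.mem_insert_iff, Set.mem_singleton_iff] at hw
      rcases hw with h|h|h|h <;> subst h <;>
        simp [Submodule.mem_inf, LinearMap.mem_ker, Pi.single_apply]
    exact this hv
  · rintro ⟨h1, h2⟩
    have hv : v = v (Sum.inl 0) • (Pi.single (Sum.inl 0) 1 : Fin 3 ⊕ Fin 3 → ℂ)
        + v (Sum.inl 1) • (Pi.single (Sum.inl 1) 1 : Fin 3 ⊕ Fin 3 → ℂ)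
        + v (Sum.inr 0) • (Pi.single (Sum.inr 0) 1 : Fin 3 ⊕ Fin 3 → ℂ)
        + v (Sum.inr 1) • (Pi.single (Sum.inr 1) 1 : Fin 3 ⊕ Fin 3 → ℂ) := by
      funext j
      rcases j with i|i <;> fin_cases i <;>
        simp_all [Pi.single_apply]
    rw [hv]
    apply Submodule.add_mem _ (Submodule.add_mem _ (Submodule.add_mem _ _ _) _) _ <;>
      exact Submodule.smul_mem _ _ (Submodule.subset_span (by simp))

noncomputable def lamM : ℂ := -(((Real.sqrt 5 + 1) / 2 : ℝ) : ℂ)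
noncomputable def lamP : ℂ := (((Real.sqrt 5 - 1) / 2 : ℝ) : ℂ)

lemma sqrt5_sq : (((Real.sqrt 5 : ℝ)) : ℂ)^2 = 5 := by
  rw [← Complex.ofReal_pow, Real.sq_sqrt (by norm_num : (5:ℝ) ≥ 0)]
  norm_num

lemma root_iff (μ : ℂ) : μ^2 + μ - 1 = 0 ↔ μ = lamM ∨ μ = lamP := by
  have hfac : μ^2 + μ - 1 = (μ - lamM) * (μ - lamP) := by
    have h := sqrt5_sq
    simp only [lamM, lamP, Complex.ofReal_div, Complex.ofReal_add, Complex.ofReal_sub,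
      Complex.ofReal_one, Complex.ofReal_ofNat]
    linear_combination (1/4 : ℂ) * h
  rw [hfac, mul_eq_zero, sub_eq_zero, sub_eq_zero]

lemma lamM_root : lamM^2 + lamM - 1 = 0 := (root_iff _).2 (Or.inl rfl)
lemma lamP_root : lamP^2 + lamP - 1 = 0 := (root_iff _).2 (Or.inr rfl)

lemma root_ne_zero {μ : ℂ} (h : μ^2 + μ - 1 = 0) : μ ≠ 0 := by
  rintro rfl; simp at h
lemma root_ne_negone {μ : ℂ} (h : μ^2 + μ - 1 = 0) : μ + 1 ≠ 0 := by
  intro h1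
  have : μ = -1 := by linear_combination h1
  subst this; norm_num at h

lemma vec_eq_zero {v : Fin 3 ⊕ Fin 3 → ℂ} (h0 : v (Sum.inl 0) = 0) (h1 : v (Sum.inl 1) = 0)
    (h2 : v (Sum.inl 2) = 0) (h3 : v (Sum.inr 0) = 0) (h4 : v (Sum.inr 1) = 0)
    (h5 : v (Sum.inr 2) = 0) : v = 0 := by
  funext j
  rcases j with i|i <;> fin_cases i <;> simp only [Pi.zero_apply] <;> assumption

lemma eig_comp {μ : ℂ} {v : Fin 3 ⊕ Fin 3 → ℂ} (h : Ainv.mulVec v = μ • v) :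
    v (Sum.inr 0) = μ * v (Sum.inl 0) ∧ v (Sum.inr 1) = μ * v (Sum.inl 1) ∧
    v (Sum.inl 0) - v (Sum.inr 0) = μ * v (Sum.inr 0) ∧
    v (Sum.inl 1) - v (Sum.inr 1) = μ * v (Sum.inr 1) ∧
    0 = μ * v (Sum.inl 2) ∧ -(v (Sum.inr 2)) = μ * v (Sum.inr 2) := by
  rw [Ainv_mulVec] at h
  refine ⟨congrFun h (Sum.inl 0), congrFun h (Sum.inl 1), congrFun h (Sum.inr 0),
    congrFun h (Sum.inr 1), congrFun h (Sum.inl 2), congrFun h (Sum.inr 2)⟩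

lemma eig_vec {μ : ℂ} (hμ : μ^2 + μ - 1 = 0) (a b : ℂ) :
    Ainv.mulVec (Sum.elim ![a, b, 0] ![μ * a, μ * b, 0]) =
      μ • (Sum.elim ![a, b, 0] ![μ * a, μ * b, 0]) := by
  rw [Ainv_mulVec]
  funext j
  rcases j with i|i <;> fin_cases i <;> simp <;>
    first
      | linear_combination (-a) * hμ
      | linear_combination (-b) * hμ

lemma finrank_eig {μ : ℂ} (hμ : μ^2 + μ - 1 = 0) :
    Module.finrank ℂ
      ↥(Module.End.eigenspace Ainv.mulVecLin μ ⊓ invSubspace) = 2 := by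
  set E := Module.End.eigenspace Ainv.mulVecLin μ ⊓ invSubspace with hE
  have hmem : ∀ v : Fin 3 ⊕ Fin 3 → ℂ, v ∈ E ↔ Ainv.mulVec v = μ • v ∧
      v (Sum.inl 2) = 0 ∧ v (Sum.inr 2) = 0 := by
    intro v
    rw [hE, Submodule.mem_inf, Module.End.mem_eigenspace_iff, mulVecLin_apply,
      mem_invSubspace]
  have hμ0 : μ ≠ 0 := by rintro rfl; simp at hμ
  have hzero : ∀ v ∈ E, v (Sum.inl 0) = 0 → v (Sum.inl 1) = 0 → v = 0 := by
    intro v hv h0 h1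
    rw [hmem] at hv
    obtain ⟨hA, hl2, hr2⟩ := hv
    obtain ⟨e0, e1, -, -, -, -⟩ := eig_comp hA
    refine vec_eq_zero h0 h1 hl2 ?_ ?_ hr2
    · rw [e0, h0, mul_zero]
    · rw [e1, h1, mul_zero]
  let f : E →ₗ[ℂ] (Fin 2 → ℂ) :=
    { toFun := fun v => ![v.1 (Sum.inl 0), v.1 (Sum.inl 1)]
      map_add' := by intro a b; funext i; fin_cases i <;> simp
      map_smul' := by intro c a; funext i; fin_cases i <;> simp }
  have hinj : Function.Injective f := by
    rw [← LinearMap.ker_eq_bot, LinearMap.ker_eq_bot']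
    intro v hv
    have h0 := congrFun hv 0
    have h1 := congrFun hv 1
    simp [f] at h0 h1
    exact Subtype.ext (hzero v.1 v.2 h0 h1)
  have hsurj : Function.Surjective f := by
    intro c
    refine ⟨⟨Sum.elim ![c 0, c 1, 0] ![μ * c 0, μ * c 1, 0], ?_⟩, ?_⟩
    · rw [hmem]
      exact ⟨eig_vec hμ (c 0) (c 1), by simp, by simp⟩
    · funext i; fin_cases i <;> simp [f]
  have := (LinearEquiv.ofBijective f ⟨hinj, hsurj⟩).finrank_eq
  simpa using this

/-- At the inverted equilibrium, the restriction of the linearization to the invariant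
subspace `span{e₁,e₂,e₄,e₅}` has eigenvalues `-(√5+1)/2` and `(√5-1)/2`, each with
multiplicity 2; hence the inverted equilibrium is a hyperbolic saddle. -/
theorem inverted_equilibrium_saddle :
    (∀ μ : ℂ, (∃ v ∈ invSubspace, v ≠ 0 ∧ Ainv.mulVec v = μ • v) ↔
      (μ = -((Real.sqrt 5 + 1) / 2 : ℝ) ∨ μ = (((Real.sqrt 5 - 1) / 2 : ℝ) : ℂ))) ∧
    Module.finrank ℂ
      ↥(Module.End.eigenspace Ainv.mulVecLin (-((Real.sqrt 5 + 1) / 2 : ℝ) : ℂ)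
        ⊓ invSubspace) = 2 ∧
    Module.finrank ℂ
      ↥(Module.End.eigenspace Ainv.mulVecLin ((((Real.sqrt 5 - 1) / 2 : ℝ)) : ℂ)
        ⊓ invSubspace) = 2 := by
  have key : ∀ μ : ℂ, (∃ v ∈ invSubspace, v ≠ 0 ∧ Ainv.mulVec v = μ • v) ↔
      (μ = lamM ∨ μ = lamP) := by
    intro μ
    constructor
    · rintro ⟨v, hvS, hv0, hAv⟩
      rw [mem_invSubspace] at hvS
      obtain ⟨e0, e1, f0, f1, -, -⟩ := eig_comp hAv
      rw [← root_iff]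
      have hne : v (Sum.inl 0) ≠ 0 ∨ v (Sum.inl 1) ≠ 0 := by
        by_contra hc
        push_neg at hc
        refine hv0 (vec_eq_zero hc.1 hc.2 hvS.1 ?_ ?_ hvS.2)
        · rw [e0, hc.1, mul_zero]
        · rw [e1, hc.2, mul_zero]
      rcases hne with h|h
      · have : (μ^2 + μ - 1) * v (Sum.inl 0) = 0 := by
          linear_combination (-(μ+1)) * e0 - f0
        exact (mul_eq_zero.1 this).resolve_right h
      · have : (μ^2 + μ - 1) * v (Sum.inl 1) = 0 := by
          linear_combination (-(μ+1)) * e1 - f1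
        exact (mul_eq_zero.1 this).resolve_right h
    · intro hμ
      have hroot : μ^2 + μ - 1 = 0 := (root_iff μ).2 hμ
      refine ⟨Sum.elim ![1, 0, 0] ![μ * 1, μ * 0, 0], ?_, ?_, eig_vec hroot 1 0⟩
      · rw [mem_invSubspace]; simp
      · intro h
        have := congrFun h (Sum.inl 0)
        simp at this
  have h1 : -(((Real.sqrt 5 + 1) / 2 : ℝ) : ℂ) = lamM := rfl
  have h2 : (((Real.sqrt 5 - 1) / 2 : ℝ) : ℂ) = lamP := rfl
  refine ⟨fun μ => by rw [h1, h2]; exact key μ, ?_, ?_⟩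
  · rw [h1]; exact finrank_eig lamM_root
  · rw [h2]; exact finrank_eig lamP_root
end
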